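/- The rewrite relation of the clocked λ-calculus is locally confluent: if M →c N₁ and M →c N₂, then there exists P with N₁ ↠c P and N₂ ↠c P. -/

import Mathlib

/-- clocked λ-terms: λ-terms with an extra unary constructor τ -/
inductive CLam : Type
  | var : Nat → CLam
  | app : CLam → CLam → CLam
  | lam : CLam → CLam
  | tau : CLam → CLam
deriving DecidableEq

namespace CLam

def lift (d : Nat) : CLam → CLam
  | var n => if n < d then var n else var (n+1)
  | app M N => app (lift d M) (lift d N)
  | lam M => lam (lift (d+1) M)
  | tau M => tau (lift d M)

def subst (k : Nat) (N : CLam) : CLam → CLam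
  | var n => if n = k then N else if k < n then var (n-1) else var n
  | app A B => app (subst k N A) (subst k N B)
  | lam A => lam (subst (k+1) (lift 0 N) A)
  | tau A => tau (subst k N A)

/-- one-step clocked reduction: compatible closure of
    (λ.M)N → τ(M[0:=N]) and (τ M)N → τ(M N) -/
inductive CStep : CLam → CLam → Prop
  | beta (M N : CLam) : CStep (app (lam M) N) (tau (subst 0 N M))
  | tauApp (M N : CLam) : CStep (app (tau M) N) (tau (app M N))
  | appL {M M'} (N) : CStep M M' → CStep (app M N) (app M' N)
  | appR (M) {N N'} : CStep N N' → CStep (app M N) (app M N')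
  | lam {M M'} : CStep M M' → CStep (lam M) (lam M')
  | tau {M M'} : CStep M M' → CStep (tau M) (tau M')

abbrev CStar : CLam → CLam → Prop := Relation.ReflTransGen CStep

/-- n-fold τ -/
def tauN : Nat → CLam → CLam
  | 0, M => M
  | n+1, M => tau (tauN n M)

end CLam

open CLam

/-!
The two root rules never overlap, so every critical pair is a root redex against a step
strictly inside it. For `(λ.M) N`, a step in `M` survives substitution (`CStep.subst`), while a
step in `N` has to be performed once for every copy of `N` in `M[0 := N]`, which is why `↠c` and
not `→c` is needed to close it. A `τ`-redex `(τ M) N` commutes with any inner step in one step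
on each side. All other pairs are disjoint or nested inside a congruence.
-/

namespace CLam

theorem subst_lift (M N : CLam) (k : ℕ) : subst k N (lift k M) = M := by
  induction M generalizing k N with
  | var n => grind [lift, subst]
  | app A B ihA ihB => simp [lift, subst, ihA, ihB]
  | lam A ih => simp [lift, subst, ih]
  | tau A ih => simp [lift, subst, ih]

theorem lift_lift_of_le (M : CLam) {i j : ℕ} (h : i ≤ j) :
    lift i (lift j M) = lift (j + 1) (lift i M) := by
  induction M generalizing i j with
  | var n => grind [lift]
  | app A B ihA ihB => simp [lift, ihA h, ihB h]
  | lam A ih => simp [lift, ih (Nat.succ_le_succ h)]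
  | tau A ih => simp [lift, ih h]

theorem lift_subst_of_le (M N : CLam) {i k : ℕ} (h : i ≤ k) :
    lift i (subst k N M) = subst (k + 1) (lift i N) (lift i M) := by
  induction M generalizing i k N with
  | var n => grind [lift, subst]
  | app A B ihA ihB => simp [lift, subst, ihA _ h, ihB _ h]
  | lam A ih =>
    simp only [lift, subst, ih _ (Nat.succ_le_succ h), lift_lift_of_le N (Nat.zero_le i)]
  | tau A ih => simp [lift, subst, ih _ h]

theorem lift_subst_of_ge (M N : CLam) {i k : ℕ} (h : k ≤ i) :
    lift i (subst k N M) = subst k (lift i N) (lift (i + 1) M) := by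
  induction M generalizing i k N with
  | var n => grind [lift, subst]
  | app A B ihA ihB => simp [lift, subst, ihA _ h, ihB _ h]
  | lam A ih =>
    simp only [lift, subst, ih _ (Nat.succ_le_succ h), lift_lift_of_le N (Nat.zero_le i)]
  | tau A ih => simp [lift, subst, ih _ h]

theorem subst_subst_of_le (M N L : CLam) {i k : ℕ} (h : i ≤ k) :
    subst k N (subst i L M) = subst i (subst k N L) (subst (k + 1) (lift i N) M) := by
  induction M generalizing i k N L with
  | var n => grind [subst, subst_lift]
  | app A B ihA ihB => simp [subst, ihA _ _ h, ihB _ _ h]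
  | lam A ih =>
    simp only [subst, ih _ _ (Nat.succ_le_succ h), ← lift_subst_of_le L N (Nat.zero_le k),
      lift_lift_of_le N (Nat.zero_le i)]
  | tau A ih => simp [subst, ih _ _ h]

theorem CStep.lift {M M' : CLam} (h : CStep M M') (d : ℕ) : CStep (lift d M) (lift d M') := by
  induction h generalizing d with
  | beta M N =>
    simp only [CLam.lift, lift_subst_of_ge M N (Nat.zero_le d)]
    exact .beta _ _
  | tauApp M N => exact .tauApp _ _
  | appL N _ ih => exact .appL _ (ih d)
  | appR M _ ih => exact .appR _ (ih d)
  | lam _ ih => exact .lam (ih (d + 1))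
  | tau _ ih => exact .tau (ih d)

theorem CStep.subst {M M' : CLam} (h : CStep M M') (k : ℕ) (N : CLam) :
    CStep (subst k N M) (subst k N M') := by
  induction h generalizing k N with
  | beta M L =>
    simp only [CLam.subst, subst_subst_of_le M N L (Nat.zero_le k)]
    exact .beta _ _
  | tauApp M L => exact .tauApp _ _
  | appL _ _ ih => exact .appL _ (ih k N)
  | appR _ _ ih => exact .appR _ (ih k N)
  | lam _ ih => exact .lam (ih (k + 1) (CLam.lift 0 N))
  | tau _ ih => exact .tau (ih k N)

theorem CStar.map {f : CLam → CLam} (hf : ∀ {M M'}, CStep M M' → CStep (f M) (f M'))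
    {M M' : CLam} (h : CStar M M') : CStar (f M) (f M') :=
  Relation.ReflTransGen.lift f (fun _ _ ↦ hf) _ _ h

theorem CStar.lift {M M' : CLam} (h : CStar M M') (d : ℕ) : CStar (lift d M) (lift d M') :=
  h.map (·.lift d)

theorem CStar.subst_arg (M : CLam) {N N' : CLam} (h : CStar N N') (k : ℕ) :
    CStar (subst k N M) (subst k N' M) := by
  induction M generalizing k N N' with
  | var n =>
    simp only [CLam.subst]
    split_ifs
    exacts [h, .refl, .refl]
  | app A B ihA ihB =>
    exact ((ihA h k).map (.appL _)).trans ((ihB h k).map (.appR _))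
  | lam A ih => exact (ih (h.lift 0) (k + 1)).map .lam
  | tau A ih => exact (ih h k).map .tau

theorem join_star_map {f : CLam → CLam} (hf : ∀ {M M'}, CStep M M' → CStep (f M) (f M'))
    {M M' : CLam} (h : Relation.Join CStar M M') : Relation.Join CStar (f M) (f M') :=
  let ⟨P, hMP, hM'P⟩ := h
  ⟨f P, hMP.map hf, hM'P.map hf⟩

theorem join_beta {M N N₂ : CLam} (h : CStep (app (lam M) N) N₂) :
    Relation.Join CStar (tau (subst 0 N M)) N₂ := by
  cases h with
  | beta => exact ⟨_, .refl, .refl⟩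
  | appL _ h => cases h with
    | lam h => exact ⟨_, .single (.tau (h.subst 0 N)), .single (.beta _ _)⟩
  | appR _ h => exact ⟨_, (CStar.subst_arg M (.single h) 0).map .tau, .single (.beta _ _)⟩

theorem join_tauApp {M N N₂ : CLam} (h : CStep (app (tau M) N) N₂) :
    Relation.Join CStar (tau (app M N)) N₂ := by
  cases h with
  | tauApp => exact ⟨_, .refl, .refl⟩
  | appL _ h => cases h with
    | tau h => exact ⟨_, .single (.tau (.appL N h)), .single (.tauApp _ _)⟩
  | appR _ h => exact ⟨_, .single (.tau (.appR M h)), .single (.tauApp _ _)⟩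

end CLam

theorem clocked_locally_confluent :
    ∀ M N₁ N₂ : CLam, CStep M N₁ → CStep M N₂ →
      ∃ P : CLam, CStar N₁ P ∧ CStar N₂ P := by
  intro M N₁ N₂ h₁ h₂
  induction h₁ generalizing N₂ with
  | beta => exact join_beta h₂
  | tauApp => exact join_tauApp h₂
  | appL N h ih => cases h₂ with
    | beta => exact symm (join_beta (.appL N h))
    | tauApp => exact symm (join_tauApp (.appL N h))
    | appL _ h₂ => exact join_star_map (.appL N) (ih _ h₂)
    | appR _ h₂ => exact ⟨_, .single (.appR _ h₂), .single (.appL _ h)⟩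
  | appR M h ih => cases h₂ with
    | beta => exact symm (join_beta (.appR _ h))
    | tauApp => exact symm (join_tauApp (.appR _ h))
    | appL _ h₂ => exact ⟨_, .single (.appL _ h₂), .single (.appR _ h)⟩
    | appR _ h₂ => exact join_star_map (.appR M) (ih _ h₂)
  | lam h ih => cases h₂ with
    | lam h₂ => exact join_star_map .lam (ih _ h₂)
  | tau h ih => cases h₂ with
    | tau h₂ => exact join_star_map .tau (ih _ h₂)
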